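/- arXiv:1507.05710 — 4 statements merged into one kernel-verified Lean document; each statement's English description precedes it below -/
import Mathlib

section
/- The set of exceptional vectors, i.e. the set of vectors $\ell\in V$ with $\langle\ell,\ell\rangle=-1$ and $\langle\ell,k\rangle=-1$, consists exactly of the $27$ vectors $a_i=f_i$ for $1\le i\le 6$, $b_i=2f_0-f_1-\cdots-f_6+f_i$ for $1\le i\le 6$, and $c_{ij}=f_0-f_i-f_j$ for $1\le i<j\le 6$; in particular there are exactly $27$ exceptional vectors. -/
set_option maxHeartbeats 1000000
set_option synthInstance.maxSize 10000

/-- The symmetric bilinear form on `ℤ^{1,6}`: `⟨x,y⟩ = x₀y₀ - ∑_{i=1}^{6} xᵢyᵢ`. -/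
def form (x y : Fin 7 → ℤ) : ℤ := 2 * (x 0 * y 0) - ∑ i, x i * y i

/-- The standard basis vector `f i` of `V = ℤ⁷`. -/
def fvec (i : Fin 7) : Fin 7 → ℤ := fun j => if j = i then 1 else 0

/-- The canonical vector `k = -3f₀ + f₁ + ⋯ + f₆`. -/
def kvec : Fin 7 → ℤ := fun i => if i = 0 then -3 else 1

/-- A root of the `E₆` lattice: a vector `r` with `⟨r,k⟩ = 0` and `⟨r,r⟩ = -2`. -/
def IsRoot (r : Fin 7 → ℤ) : Prop := form r kvec = 0 ∧ form r r = -2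

/-- An exceptional vector: a vector `ℓ` with `⟨ℓ,ℓ⟩ = -1` and `⟨ℓ,k⟩ = -1`. -/
def IsExc (l : Fin 7 → ℤ) : Prop := form l l = -1 ∧ form l kvec = -1

lemma cs5 (c d e f g : ℤ) : (c+d+e+f+g)^2 ≤ 5*(c^2+d^2+e^2+f^2+g^2) := by
  nlinarith [sq_nonneg (c-d), sq_nonneg (c-e), sq_nonneg (c-f), sq_nonneg (c-g),
    sq_nonneg (d-e), sq_nonneg (d-f), sq_nonneg (d-g), sq_nonneg (e-f), sq_nonneg (e-g),
    sq_nonneg (f-g)]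

lemma cs6 (b c d e f g : ℤ) : (b+c+d+e+f+g)^2 ≤ 6*(b^2+c^2+d^2+e^2+f^2+g^2) := by
  nlinarith [sq_nonneg (b-c), sq_nonneg (b-d), sq_nonneg (b-e), sq_nonneg (b-f), sq_nonneg (b-g),
    sq_nonneg (c-d), sq_nonneg (c-e), sq_nonneg (c-f), sq_nonneg (c-g),
    sq_nonneg (d-e), sq_nonneg (d-f), sq_nonneg (d-g), sq_nonneg (e-f), sq_nonneg (e-g),
    sq_nonneg (f-g)]

lemma bnd0 (x : ℤ) (h : (1-x)^2 ≤ 5*(1 - x*x)) : 0 ≤ x ∧ x ≤ 1 := by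
  constructor <;> nlinarith [sq_nonneg (x+1), sq_nonneg (x-1), sq_nonneg x]

lemma bnd1 (x : ℤ) (h : (-2-x)^2 ≤ 5*(2 - x*x)) : -1 ≤ x ∧ x ≤ 0 := by
  constructor <;> nlinarith [sq_nonneg (x+1), sq_nonneg (x-1), sq_nonneg x]

lemma bnd2 (x : ℤ) (h : (-5-x)^2 ≤ 5*(5 - x*x)) : -1 ≤ x ∧ x ≤ 0 := by
  constructor <;> nlinarith [sq_nonneg (x+1), sq_nonneg (x-1), sq_nonneg x]

lemma case0 (b c d e f g : ℤ)
    (hq : b*b+c*c+d*d+e*e+f*f+g*g = 1)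
    (hs : b+c+d+e+f+g = 1) :
    (b = 1 ∧ c = 0 ∧ d = 0 ∧ e = 0 ∧ f = 0 ∧ g = 0) ∨
    (b = 0 ∧ c = 1 ∧ d = 0 ∧ e = 0 ∧ f = 0 ∧ g = 0) ∨
    (b = 0 ∧ c = 0 ∧ d = 1 ∧ e = 0 ∧ f = 0 ∧ g = 0) ∨
    (b = 0 ∧ c = 0 ∧ d = 0 ∧ e = 1 ∧ f = 0 ∧ g = 0) ∨
    (b = 0 ∧ c = 0 ∧ d = 0 ∧ e = 0 ∧ f = 1 ∧ g = 0) ∨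
    (b = 0 ∧ c = 0 ∧ d = 0 ∧ e = 0 ∧ f = 0 ∧ g = 1) := by
  have hb1 : b = 0 ∨ b = 1 := by
    have h := cs5 c d e f g
    rw [show c+d+e+f+g = 1 - b by linarith] at h
    have := bnd0 b (by linarith)
    omega
  have hc1 : c = 0 ∨ c = 1 := by
    have h := cs5 b d e f g
    rw [show b+d+e+f+g = 1 - c by linarith] at h
    have := bnd0 c (by linarith)
    omega
  have hd1 : d = 0 ∨ d = 1 := by
    have h := cs5 b c e f g
    rw [show b+c+e+f+g = 1 - d by linarith] at h
    have := bnd0 d (by linarith)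
    omega
  have he1 : e = 0 ∨ e = 1 := by
    have h := cs5 b c d f g
    rw [show b+c+d+f+g = 1 - e by linarith] at h
    have := bnd0 e (by linarith)
    omega
  have hf1 : f = 0 ∨ f = 1 := by
    have h := cs5 b c d e g
    rw [show b+c+d+e+g = 1 - f by linarith] at h
    have := bnd0 f (by linarith)
    omega
  have hg1 : g = 0 ∨ g = 1 := by
    have h := cs5 b c d e f
    rw [show b+c+d+e+f = 1 - g by linarith] at h
    have := bnd0 g (by linarith)
    omega
  clear hq
  rcases hb1 with rfl|rfl <;> rcases hc1 with rfl|rfl <;> rcases hd1 with rfl|rfl <;>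
    rcases he1 with rfl|rfl <;> rcases hf1 with rfl|rfl <;> rcases hg1 with rfl|rfl <;>
      first | (exfalso; omega) | decide

lemma case1 (b c d e f g : ℤ)
    (hq : b*b+c*c+d*d+e*e+f*f+g*g = 2)
    (hs : b+c+d+e+f+g = -2) :
    (b = -1 ∧ c = -1 ∧ d = 0 ∧ e = 0 ∧ f = 0 ∧ g = 0) ∨
    (b = -1 ∧ c = 0 ∧ d = -1 ∧ e = 0 ∧ f = 0 ∧ g = 0) ∨
    (b = -1 ∧ c = 0 ∧ d = 0 ∧ e = -1 ∧ f = 0 ∧ g = 0) ∨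
    (b = -1 ∧ c = 0 ∧ d = 0 ∧ e = 0 ∧ f = -1 ∧ g = 0) ∨
    (b = -1 ∧ c = 0 ∧ d = 0 ∧ e = 0 ∧ f = 0 ∧ g = -1) ∨
    (b = 0 ∧ c = -1 ∧ d = -1 ∧ e = 0 ∧ f = 0 ∧ g = 0) ∨
    (b = 0 ∧ c = -1 ∧ d = 0 ∧ e = -1 ∧ f = 0 ∧ g = 0) ∨
    (b = 0 ∧ c = -1 ∧ d = 0 ∧ e = 0 ∧ f = -1 ∧ g = 0) ∨
    (b = 0 ∧ c = -1 ∧ d = 0 ∧ e = 0 ∧ f = 0 ∧ g = -1) ∨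
    (b = 0 ∧ c = 0 ∧ d = -1 ∧ e = -1 ∧ f = 0 ∧ g = 0) ∨
    (b = 0 ∧ c = 0 ∧ d = -1 ∧ e = 0 ∧ f = -1 ∧ g = 0) ∨
    (b = 0 ∧ c = 0 ∧ d = -1 ∧ e = 0 ∧ f = 0 ∧ g = -1) ∨
    (b = 0 ∧ c = 0 ∧ d = 0 ∧ e = -1 ∧ f = -1 ∧ g = 0) ∨
    (b = 0 ∧ c = 0 ∧ d = 0 ∧ e = -1 ∧ f = 0 ∧ g = -1) ∨
    (b = 0 ∧ c = 0 ∧ d = 0 ∧ e = 0 ∧ f = -1 ∧ g = -1) := by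
  have hb1 : b = -1 ∨ b = 0 := by
    have h := cs5 c d e f g
    rw [show c+d+e+f+g = -2 - b by linarith] at h
    have := bnd1 b (by linarith)
    omega
  have hc1 : c = -1 ∨ c = 0 := by
    have h := cs5 b d e f g
    rw [show b+d+e+f+g = -2 - c by linarith] at h
    have := bnd1 c (by linarith)
    omega
  have hd1 : d = -1 ∨ d = 0 := by
    have h := cs5 b c e f g
    rw [show b+c+e+f+g = -2 - d by linarith] at h
    have := bnd1 d (by linarith)
    omega
  have he1 : e = -1 ∨ e = 0 := by
    have h := cs5 b c d f g
    rw [show b+c+d+f+g = -2 - e by linarith] at h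
    have := bnd1 e (by linarith)
    omega
  have hf1 : f = -1 ∨ f = 0 := by
    have h := cs5 b c d e g
    rw [show b+c+d+e+g = -2 - f by linarith] at h
    have := bnd1 f (by linarith)
    omega
  have hg1 : g = -1 ∨ g = 0 := by
    have h := cs5 b c d e f
    rw [show b+c+d+e+f = -2 - g by linarith] at h
    have := bnd1 g (by linarith)
    omega
  clear hq
  rcases hb1 with rfl|rfl <;> rcases hc1 with rfl|rfl <;> rcases hd1 with rfl|rfl <;>
    rcases he1 with rfl|rfl <;> rcases hf1 with rfl|rfl <;> rcases hg1 with rfl|rfl <;>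
      first | (exfalso; omega) | decide

lemma case2 (b c d e f g : ℤ)
    (hq : b*b+c*c+d*d+e*e+f*f+g*g = 5)
    (hs : b+c+d+e+f+g = -5) :
    (b = 0 ∧ c = -1 ∧ d = -1 ∧ e = -1 ∧ f = -1 ∧ g = -1) ∨
    (b = -1 ∧ c = 0 ∧ d = -1 ∧ e = -1 ∧ f = -1 ∧ g = -1) ∨
    (b = -1 ∧ c = -1 ∧ d = 0 ∧ e = -1 ∧ f = -1 ∧ g = -1) ∨
    (b = -1 ∧ c = -1 ∧ d = -1 ∧ e = 0 ∧ f = -1 ∧ g = -1) ∨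
    (b = -1 ∧ c = -1 ∧ d = -1 ∧ e = -1 ∧ f = 0 ∧ g = -1) ∨
    (b = -1 ∧ c = -1 ∧ d = -1 ∧ e = -1 ∧ f = -1 ∧ g = 0) := by
  have hb1 : b = -1 ∨ b = 0 := by
    have h := cs5 c d e f g
    rw [show c+d+e+f+g = -5 - b by linarith] at h
    have := bnd2 b (by linarith)
    omega
  have hc1 : c = -1 ∨ c = 0 := by
    have h := cs5 b d e f g
    rw [show b+d+e+f+g = -5 - c by linarith] at h
    have := bnd2 c (by linarith)
    omega
  have hd1 : d = -1 ∨ d = 0 := by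
    have h := cs5 b c e f g
    rw [show b+c+e+f+g = -5 - d by linarith] at h
    have := bnd2 d (by linarith)
    omega
  have he1 : e = -1 ∨ e = 0 := by
    have h := cs5 b c d f g
    rw [show b+c+d+f+g = -5 - e by linarith] at h
    have := bnd2 e (by linarith)
    omega
  have hf1 : f = -1 ∨ f = 0 := by
    have h := cs5 b c d e g
    rw [show b+c+d+e+g = -5 - f by linarith] at h
    have := bnd2 f (by linarith)
    omega
  have hg1 : g = -1 ∨ g = 0 := by
    have h := cs5 b c d e f
    rw [show b+c+d+e+f = -5 - g by linarith] at h
    have := bnd2 g (by linarith)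
    omega
  clear hq
  rcases hb1 with rfl|rfl <;> rcases hc1 with rfl|rfl <;> rcases hd1 with rfl|rfl <;>
    rcases he1 with rfl|rfl <;> rcases hf1 with rfl|rfl <;> rcases hg1 with rfl|rfl <;>
      first | (exfalso; omega) | decide

def F : Finset (Fin 7 → ℤ) := {![0,1,0,0,0,0,0], ![0,0,1,0,0,0,0], ![0,0,0,1,0,0,0], ![0,0,0,0,1,0,0], ![0,0,0,0,0,1,0], ![0,0,0,0,0,0,1], ![2,0,-1,-1,-1,-1,-1], ![2,-1,0,-1,-1,-1,-1], ![2,-1,-1,0,-1,-1,-1], ![2,-1,-1,-1,0,-1,-1], ![2,-1,-1,-1,-1,0,-1], ![2,-1,-1,-1,-1,-1,0], ![1,-1,-1,0,0,0,0], ![1,-1,0,-1,0,0,0], ![1,-1,0,0,-1,0,0], ![1,-1,0,0,0,-1,0], ![1,-1,0,0,0,0,-1], ![1,0,-1,-1,0,0,0], ![1,0,-1,0,-1,0,0], ![1,0,-1,0,0,-1,0], ![1,0,-1,0,0,0,-1], ![1,0,0,-1,-1,0,0], ![1,0,0,-1,0,-1,0], ![1,0,0,-1,0,0,-1], ![1,0,0,0,-1,-1,0],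 ![1,0,0,0,-1,0,-1], ![1,0,0,0,0,-1,-1]}

lemma vecEq (l v : Fin 7 → ℤ) (h0 : l 0 = v 0) (h1 : l 1 = v 1) (h2 : l 2 = v 2)
    (h3 : l 3 = v 3) (h4 : l 4 = v 4) (h5 : l 5 = v 5) (h6 : l 6 = v 6) : l = v := by
  funext j; fin_cases j <;> assumption

def RHS (l : Fin 7 → ℤ) : Prop :=
  (∃ i : Fin 7, 0 < i ∧ l = fvec i) ∨
  (∃ i : Fin 7, 0 < i ∧
    l = (2 : ℤ) • fvec 0 - fvec 1 - fvec 2 - fvec 3 - fvec 4 - fvec 5 - fvec 6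
        + fvec i) ∨
  (∃ i j : Fin 7, 0 < i ∧ i < j ∧ l = fvec 0 - fvec i - fvec j)

lemma excMem (l : Fin 7 → ℤ) (h : IsExc l) : l ∈ F := by
  obtain ⟨h1, h2⟩ := h
  simp [form, kvec, Fin.sum_univ_seven] at h1 h2
  have hs : l 1 + l 2 + l 3 + l 4 + l 5 + l 6 = 1 - 3 * l 0 := by linarith
  have hcs := cs6 (l 1) (l 2) (l 3) (l 4) (l 5) (l 6)
  rw [hs] at hcs
  have ha1 : 0 ≤ l 0 := by nlinarith [sq_nonneg (l 0 + 1)]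
  have ha2 : l 0 ≤ 2 := by nlinarith [sq_nonneg (l 0 - 3)]
  have h3 : l 0 = 0 ∨ l 0 = 1 ∨ l 0 = 2 := by omega
  rcases h3 with h0|h0|h0
  · have hD := case0 (l 1) (l 2) (l 3) (l 4) (l 5) (l 6)
      (by rw [h0] at h1; linarith) (by rw [h0] at hs; linarith)
    rcases hD with ⟨e1,e2,e3,e4,e5,e6⟩|⟨e1,e2,e3,e4,e5,e6⟩|⟨e1,e2,e3,e4,e5,e6⟩|⟨e1,e2,e3,e4,e5,e6⟩|⟨e1,e2,e3,e4,e5,e6⟩|⟨e1,e2,e3,e4,e5,e6⟩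
    · rw [vecEq l ![0,1,0,0,0,0,0] h0 e1 e2 e3 e4 e5 e6]; decide
    · rw [vecEq l ![0,0,1,0,0,0,0] h0 e1 e2 e3 e4 e5 e6]; decide
    · rw [vecEq l ![0,0,0,1,0,0,0] h0 e1 e2 e3 e4 e5 e6]; decide
    · rw [vecEq l ![0,0,0,0,1,0,0] h0 e1 e2 e3 e4 e5 e6]; decide
    · rw [vecEq l ![0,0,0,0,0,1,0] h0 e1 e2 e3 e4 e5 e6]; decide
    · rw [vecEq l ![0,0,0,0,0,0,1] h0 e1 e2 e3 e4 e5 e6]; decide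
  · have hD := case1 (l 1) (l 2) (l 3) (l 4) (l 5) (l 6)
      (by rw [h0] at h1; linarith) (by rw [h0] at hs; linarith)
    rcases hD with ⟨e1,e2,e3,e4,e5,e6⟩|⟨e1,e2,e3,e4,e5,e6⟩|⟨e1,e2,e3,e4,e5,e6⟩|⟨e1,e2,e3,e4,e5,e6⟩|⟨e1,e2,e3,e4,e5,e6⟩|⟨e1,e2,e3,e4,e5,e6⟩|⟨e1,e2,e3,e4,e5,e6⟩|⟨e1,e2,e3,e4,e5,e6⟩|⟨e1,e2,e3,e4,e5,e6⟩|⟨e1,e2,e3,e4,e5,e6⟩|⟨e1,e2,e3,e4,e5,e6⟩|⟨e1,e2,e3,e4,e5,e6⟩|⟨e1,e2,e3,e4,e5,e6⟩|⟨e1,e2,e3,e4,e5,e6⟩|⟨e1,e2,e3,e4,e5,e6⟩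
    · rw [vecEq l ![1,-1,-1,0,0,0,0] h0 e1 e2 e3 e4 e5 e6]; decide
    · rw [vecEq l ![1,-1,0,-1,0,0,0] h0 e1 e2 e3 e4 e5 e6]; decide
    · rw [vecEq l ![1,-1,0,0,-1,0,0] h0 e1 e2 e3 e4 e5 e6]; decide
    · rw [vecEq l ![1,-1,0,0,0,-1,0] h0 e1 e2 e3 e4 e5 e6]; decide
    · rw [vecEq l ![1,-1,0,0,0,0,-1] h0 e1 e2 e3 e4 e5 e6]; decide
    · rw [vecEq l ![1,0,-1,-1,0,0,0] h0 e1 e2 e3 e4 e5 e6]; decide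
    · rw [vecEq l ![1,0,-1,0,-1,0,0] h0 e1 e2 e3 e4 e5 e6]; decide
    · rw [vecEq l ![1,0,-1,0,0,-1,0] h0 e1 e2 e3 e4 e5 e6]; decide
    · rw [vecEq l ![1,0,-1,0,0,0,-1] h0 e1 e2 e3 e4 e5 e6]; decide
    · rw [vecEq l ![1,0,0,-1,-1,0,0] h0 e1 e2 e3 e4 e5 e6]; decide
    · rw [vecEq l ![1,0,0,-1,0,-1,0] h0 e1 e2 e3 e4 e5 e6]; decide
    · rw [vecEq l ![1,0,0,-1,0,0,-1] h0 e1 e2 e3 e4 e5 e6]; decide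
    · rw [vecEq l ![1,0,0,0,-1,-1,0] h0 e1 e2 e3 e4 e5 e6]; decide
    · rw [vecEq l ![1,0,0,0,-1,0,-1] h0 e1 e2 e3 e4 e5 e6]; decide
    · rw [vecEq l ![1,0,0,0,0,-1,-1] h0 e1 e2 e3 e4 e5 e6]; decide
  · have hD := case2 (l 1) (l 2) (l 3) (l 4) (l 5) (l 6)
      (by rw [h0] at h1; linarith) (by rw [h0] at hs; linarith)
    rcases hD with ⟨e1,e2,e3,e4,e5,e6⟩|⟨e1,e2,e3,e4,e5,e6⟩|⟨e1,e2,e3,e4,e5,e6⟩|⟨e1,e2,e3,e4,e5,e6⟩|⟨e1,e2,e3,e4,e5,e6⟩|⟨e1,e2,e3,e4,e5,e6⟩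
    · rw [vecEq l ![2,0,-1,-1,-1,-1,-1] h0 e1 e2 e3 e4 e5 e6]; decide
    · rw [vecEq l ![2,-1,0,-1,-1,-1,-1] h0 e1 e2 e3 e4 e5 e6]; decide
    · rw [vecEq l ![2,-1,-1,0,-1,-1,-1] h0 e1 e2 e3 e4 e5 e6]; decide
    · rw [vecEq l ![2,-1,-1,-1,0,-1,-1] h0 e1 e2 e3 e4 e5 e6]; decide
    · rw [vecEq l ![2,-1,-1,-1,-1,0,-1] h0 e1 e2 e3 e4 e5 e6]; decide
    · rw [vecEq l ![2,-1,-1,-1,-1,-1,0] h0 e1 e2 e3 e4 e5 e6]; decide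

lemma FExc : ∀ l ∈ F, IsExc l := by
  intro l hl
  fin_cases hl <;> exact ⟨by decide, by decide⟩

lemma FR : ∀ l ∈ F, RHS l := by
  intro l hl
  fin_cases hl
  · exact Or.inl ⟨1, by decide, by decide⟩
  · exact Or.inl ⟨2, by decide, by decide⟩
  · exact Or.inl ⟨3, by decide, by decide⟩
  · exact Or.inl ⟨4, by decide, by decide⟩
  · exact Or.inl ⟨5, by decide, by decide⟩
  · exact Or.inl ⟨6, by decide, by decide⟩
  · exact Or.inr (Or.inl ⟨1, by decide, by decide⟩)
  · exact Or.inr (Or.inl ⟨2, by decide, by decide⟩)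
  · exact Or.inr (Or.inl ⟨3, by decide, by decide⟩)
  · exact Or.inr (Or.inl ⟨4, by decide, by decide⟩)
  · exact Or.inr (Or.inl ⟨5, by decide, by decide⟩)
  · exact Or.inr (Or.inl ⟨6, by decide, by decide⟩)
  · exact Or.inr (Or.inr ⟨1, 2, by decide, by decide, by decide⟩)
  · exact Or.inr (Or.inr ⟨1, 3, by decide, by decide, by decide⟩)
  · exact Or.inr (Or.inr ⟨1, 4, by decide, by decide, by decide⟩)
  · exact Or.inr (Or.inr ⟨1, 5, by decide, by decide, by decide⟩)
  · exact Or.inr (Or.inr ⟨1, 6, by decide, by decide, by decide⟩)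
  · exact Or.inr (Or.inr ⟨2, 3, by decide, by decide, by decide⟩)
  · exact Or.inr (Or.inr ⟨2, 4, by decide, by decide, by decide⟩)
  · exact Or.inr (Or.inr ⟨2, 5, by decide, by decide, by decide⟩)
  · exact Or.inr (Or.inr ⟨2, 6, by decide, by decide, by decide⟩)
  · exact Or.inr (Or.inr ⟨3, 4, by decide, by decide, by decide⟩)
  · exact Or.inr (Or.inr ⟨3, 5, by decide, by decide, by decide⟩)
  · exact Or.inr (Or.inr ⟨3, 6, by decide, by decide, by decide⟩)
  · exact Or.inr (Or.inr ⟨4, 5, by decide, by decide, by decide⟩)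
  · exact Or.inr (Or.inr ⟨4, 6, by decide, by decide, by decide⟩)
  · exact Or.inr (Or.inr ⟨5, 6, by decide, by decide, by decide⟩)

lemma RExc : ∀ l, RHS l → IsExc l := by
  rintro l (⟨i, hi, rfl⟩ | ⟨i, hi, rfl⟩ | ⟨i, j, hi, hij, rfl⟩)
  · fin_cases i <;> first | exact absurd hi (by decide) | exact ⟨by decide, by decide⟩
  · fin_cases i <;> first | exact absurd hi (by decide) | exact ⟨by decide, by decide⟩
  · fin_cases i <;> fin_cases j <;>
      first | exact absurd hi (by decide) | exact absurd hij (by decide) |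
        exact ⟨by decide, by decide⟩

/-- The exceptional vectors are exactly the `27` vectors `aᵢ = fᵢ` (`1 ≤ i ≤ 6`),
`bᵢ = 2f₀ - f₁ - ⋯ - f₆ + fᵢ` (`1 ≤ i ≤ 6`) and `c_{ij} = f₀ - fᵢ - fⱼ` (`1 ≤ i < j ≤ 6`);
in particular there are exactly `27` of them. -/
theorem stmt_1 :
    ({l : Fin 7 → ℤ | IsExc l} =
      {l : Fin 7 → ℤ |
        (∃ i : Fin 7, 0 < i ∧ l = fvec i) ∨
        (∃ i : Fin 7, 0 < i ∧
          l = (2 : ℤ) • fvec 0 - fvec 1 - fvec 2 - fvec 3 - fvec 4 - fvec 5 - fvec 6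
              + fvec i) ∨
        (∃ i j : Fin 7, 0 < i ∧ i < j ∧ l = fvec 0 - fvec i - fvec j)}) ∧
    {l : Fin 7 → ℤ | IsExc l}.ncard = 27 := by
  have hset : {l : Fin 7 → ℤ | IsExc l} = ↑F :=
    Set.ext fun l => ⟨fun h => excMem l h, fun h => FExc l h⟩
  constructor
  · ext l
    simp only [Set.mem_setOf_eq]
    exact ⟨fun h => FR l (excMem l h), fun h => RExc l h⟩
  · rw [hset, Set.ncard_coe_finset]
    decide
end

section
/- For every root $r$, the pairing $\langle r,\ell\rangle$ with any exceptional vector $\ell$ lies in $\{-1,0,1\}$; moreover exactly $15$ exceptional vectors satisfy $\langle r,\ell\rangle=0$, exactly $6$ satisfy $\langle r,\ell\rangle=1$, and exactly $6$ satisfy $\langle r,\ell\rangle=-1$. -/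
/-- The 27 exceptional vectors. -/
def excL : List (Fin 7 → ℤ) := [![0,1,0,0,0,0,0], ![0,0,1,0,0,0,0], ![0,0,0,1,0,0,0], ![0,0,0,0,1,0,0], ![0,0,0,0,0,1,0], ![0,0,0,0,0,0,1], ![1,-1,-1,0,0,0,0], ![1,-1,0,-1,0,0,0], ![1,-1,0,0,-1,0,0], ![1,-1,0,0,0,-1,0], ![1,-1,0,0,0,0,-1], ![1,0,-1,-1,0,0,0], ![1,0,-1,0,-1,0,0], ![1,0,-1,0,0,-1,0], ![1,0,-1,0,0,0,-1], ![1,0,0,-1,-1,0,0], ![1,0,0,-1,0,-1,0], ![1,0,0,-1,0,0,-1], ![1,0,0,0,-1,-1,0], ![1,0,0,0,-1,0,-1], ![1,0,0,0,0,-1,-1], ![2,0,-1,-1,-1,-1,-1], ![2,-1,0,-1,-1,-1,-1], ![2,-1,-1,0,-1,-1,-1], ![2,-1,-1,-1,0,-1,-1], ![2,-1,-1,-1,-1,0,-1], ![2,-1,-1,-1,-1,-1,0]]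

/-- The 72 roots. -/
def rootL : List (Fin 7 → ℤ) := [![0,1,-1,0,0,0,0], ![0,1,0,-1,0,0,0], ![0,1,0,0,-1,0,0], ![0,1,0,0,0,-1,0], ![0,1,0,0,0,0,-1], ![0,-1,1,0,0,0,0], ![0,0,1,-1,0,0,0], ![0,0,1,0,-1,0,0], ![0,0,1,0,0,-1,0], ![0,0,1,0,0,0,-1], ![0,-1,0,1,0,0,0], ![0,0,-1,1,0,0,0], ![0,0,0,1,-1,0,0], ![0,0,0,1,0,-1,0], ![0,0,0,1,0,0,-1], ![0,-1,0,0,1,0,0], ![0,0,-1,0,1,0,0], ![0,0,0,-1,1,0,0], ![0,0,0,0,1,-1,0], ![0,0,0,0,1,0,-1], ![0,-1,0,0,0,1,0], ![0,0,-1,0,0,1,0], ![0,0,0,-1,0,1,0], ![0,0,0,0,-1,1,0], ![0,0,0,0,0,1,-1], ![0,-1,0,0,0,0,1], ![0,0,-1,0,0,0,1], ![0,0,0,-1,0,0,1], ![0,0,0,0,-1,0,1], ![0,0,0,0,0,-1,1], ![1,-1,-1,-1,0,0,0], ![1,-1,-1,0,-1,0,0], ![1,-1,-1,0,0,-1,0],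 ![1,-1,-1,0,0,0,-1], ![1,-1,0,-1,-1,0,0], ![1,-1,0,-1,0,-1,0], ![1,-1,0,-1,0,0,-1], ![1,-1,0,0,-1,-1,0], ![1,-1,0,0,-1,0,-1], ![1,-1,0,0,0,-1,-1], ![1,0,-1,-1,-1,0,0], ![1,0,-1,-1,0,-1,0], ![1,0,-1,-1,0,0,-1], ![1,0,-1,0,-1,-1,0], ![1,0,-1,0,-1,0,-1], ![1,0,-1,0,0,-1,-1], ![1,0,0,-1,-1,-1,0], ![1,0,0,-1,-1,0,-1], ![1,0,0,-1,0,-1,-1], ![1,0,0,0,-1,-1,-1], ![2,-1,-1,-1,-1,-1,-1], ![-1,1,1,1,0,0,0], ![-1,1,1,0,1,0,0], ![-1,1,1,0,0,1,0], ![-1,1,1,0,0,0,1], ![-1,1,0,1,1,0,0], ![-1,1,0,1,0,1,0], ![-1,1,0,1,0,0,1], ![-1,1,0,0,1,1,0], ![-1,1,0,0,1,0,1], ![-1,1,0,0,0,1,1], ![-1,0,1,1,1,0,0], ![-1,0,1,1,0,1,0], ![-1,0,1,1,0,0,1], ![-1,0,1,0,1,1,0], ![-1,0,1,0,1,0,1],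 ![-1,0,1,0,0,1,1], ![-1,0,0,1,1,1,0], ![-1,0,0,1,1,0,1], ![-1,0,0,1,0,1,1], ![-1,0,0,0,1,1,1], ![-2,1,1,1,1,1,1]]

lemma sq_sub (b : ℤ) : b ≤ b*b := by
  rcases le_or_gt b 0 with h|h
  · nlinarith
  · nlinarith

lemma l01 (b : ℤ) (h : b*b ≤ b) : 0 ≤ b ∧ b ≤ 1 := by
  have h1 := sq_sub b
  constructor
  · linarith [mul_self_nonneg b]
  · nlinarith [sq_nonneg (b-1)]

lemma lm10 (b : ℤ) (h : b*b ≤ -b) : -1 ≤ b ∧ b ≤ 0 := by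
  have := l01 (-b) (by nlinarith)
  omega

lemma sq_le2 (x : ℤ) (h : x*x ≤ 2) : -1 ≤ x ∧ x ≤ 1 := by
  have h4 : 4*x ≤ 6 := by nlinarith [sq_nonneg (x-2)]
  have h4' : -6 ≤ 4*x := by nlinarith [sq_nonneg (x+2)]
  omega

lemma cauchy6 (b1 b2 b3 b4 b5 b6 : ℤ) :
    (b1+b2+b3+b4+b5+b6)^2 ≤ 6*(b1*b1+b2*b2+b3*b3+b4*b4+b5*b5+b6*b6) := by
  linarith [sq_nonneg (b1-b2), sq_nonneg (b1-b3), sq_nonneg (b1-b4), sq_nonneg (b1-b5), sq_nonneg (b1-b6), sq_nonneg (b2-b3), sq_nonneg (b2-b4), sq_nonneg (b2-b5), sq_nonneg (b2-b6), sq_nonneg (b3-b4), sq_nonneg (b3-b5), sq_nonneg (b3-b6), sq_nonneg (b4-b5), sq_nonneg (b4-b6), sq_nonneg (b5-b6)]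

lemma div3 (x : ℤ) (h : 3*x ≤ 8) : x ≤ 2 := by omega

lemma eq_neg_one_of (b : ℤ) (h : (b+1)*(b+1) ≤ 0) : b = -1 := by
  have h2 := mul_self_nonneg (b+1)
  have h3 : (b+1)*(b+1) = 0 := le_antisymm h h2
  have := mul_self_eq_zero.mp h3
  omega

set_option maxHeartbeats 1000000 in
lemma exc_dec0 : ∀ b1 ∈ Finset.Icc (0:ℤ) 1, ∀ b2 ∈ Finset.Icc (0:ℤ) 1, ∀ b3 ∈ Finset.Icc (0:ℤ) 1,
    ∀ b4 ∈ Finset.Icc (0:ℤ) 1, ∀ b5 ∈ Finset.Icc (0:ℤ) 1, ∀ b6 ∈ Finset.Icc (0:ℤ) 1,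
    b1+b2+b3+b4+b5+b6 = 1 → ![0,b1,b2,b3,b4,b5,b6] ∈ excL := by decide

set_option maxHeartbeats 1000000 in
lemma exc_dec1 : ∀ b1 ∈ Finset.Icc (-1:ℤ) 0, ∀ b2 ∈ Finset.Icc (-1:ℤ) 0, ∀ b3 ∈ Finset.Icc (-1:ℤ) 0,
    ∀ b4 ∈ Finset.Icc (-1:ℤ) 0, ∀ b5 ∈ Finset.Icc (-1:ℤ) 0, ∀ b6 ∈ Finset.Icc (-1:ℤ) 0,
    b1+b2+b3+b4+b5+b6 = -2 → ![1,b1,b2,b3,b4,b5,b6] ∈ excL := by decide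

set_option maxHeartbeats 1000000 in
lemma exc_dec2 : ∀ b1 ∈ Finset.Icc (-1:ℤ) 0, ∀ b2 ∈ Finset.Icc (-1:ℤ) 0, ∀ b3 ∈ Finset.Icc (-1:ℤ) 0,
    ∀ b4 ∈ Finset.Icc (-1:ℤ) 0, ∀ b5 ∈ Finset.Icc (-1:ℤ) 0, ∀ b6 ∈ Finset.Icc (-1:ℤ) 0,
    b1+b2+b3+b4+b5+b6 = -5 → ![2,b1,b2,b3,b4,b5,b6] ∈ excL := by decide

set_option maxHeartbeats 4000000 in
lemma root_dec0 : ∀ b1 ∈ Finset.Icc (-1:ℤ) 1, ∀ b2 ∈ Finset.Icc (-1:ℤ) 1, ∀ b3 ∈ Finset.Icc (-1:ℤ) 1,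
    ∀ b4 ∈ Finset.Icc (-1:ℤ) 1, ∀ b5 ∈ Finset.Icc (-1:ℤ) 1, ∀ b6 ∈ Finset.Icc (-1:ℤ) 1,
    b1*b1+b2*b2+b3*b3+b4*b4+b5*b5+b6*b6 = 2 → b1+b2+b3+b4+b5+b6 = 0 → ![0,b1,b2,b3,b4,b5,b6] ∈ rootL := by decide

set_option maxHeartbeats 1000000 in
lemma root_dec1 : ∀ b1 ∈ Finset.Icc (-1:ℤ) 0, ∀ b2 ∈ Finset.Icc (-1:ℤ) 0, ∀ b3 ∈ Finset.Icc (-1:ℤ) 0,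
    ∀ b4 ∈ Finset.Icc (-1:ℤ) 0, ∀ b5 ∈ Finset.Icc (-1:ℤ) 0, ∀ b6 ∈ Finset.Icc (-1:ℤ) 0,
    b1+b2+b3+b4+b5+b6 = -3 → ![1,b1,b2,b3,b4,b5,b6] ∈ rootL := by decide

set_option maxHeartbeats 1000000 in
lemma root_decm1 : ∀ b1 ∈ Finset.Icc (0:ℤ) 1, ∀ b2 ∈ Finset.Icc (0:ℤ) 1, ∀ b3 ∈ Finset.Icc (0:ℤ) 1,
    ∀ b4 ∈ Finset.Icc (0:ℤ) 1, ∀ b5 ∈ Finset.Icc (0:ℤ) 1, ∀ b6 ∈ Finset.Icc (0:ℤ) 1,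
    b1+b2+b3+b4+b5+b6 = 3 → ![-1,b1,b2,b3,b4,b5,b6] ∈ rootL := by decide

set_option maxHeartbeats 1000000 in
lemma exc_key (a b1 b2 b3 b4 b5 b6 : ℤ)
    (hq : b1*b1+b2*b2+b3*b3+b4*b4+b5*b5+b6*b6 = a*a+1) (hs : b1+b2+b3+b4+b5+b6 = 1-3*a) :
    ![a,b1,b2,b3,b4,b5,b6] ∈ excL := by
  have cs0 := cauchy6 b1 b2 b3 b4 b5 b6
  rw [hs, hq] at cs0
  have c3 : 3*((a-1)*(a-1)) ≤ 8 := by nlinarith [cs0]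
  have hb := sq_le2 (a-1) (div3 _ c3)
  have ha0 : 0 ≤ a := by omega
  have ha2 : a ≤ 2 := by omega
  have s1 := sq_sub b1; have s2 := sq_sub b2; have s3 := sq_sub b3
  have s4 := sq_sub b4; have s5 := sq_sub b5; have s6 := sq_sub b6
  have t1 := sq_sub (-b1); have t2 := sq_sub (-b2); have t3 := sq_sub (-b3)
  have t4 := sq_sub (-b4); have t5 := sq_sub (-b5); have t6 := sq_sub (-b6)
  interval_cases a
  · -- a = 0
    have e1 := l01 b1 (by linarith)
    have e2 := l01 b2 (by linarith)
    have e3 := l01 b3 (by linarith)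
    have e4 := l01 b4 (by linarith)
    have e5 := l01 b5 (by linarith)
    have e6 := l01 b6 (by linarith)
    exact exc_dec0 b1 (Finset.mem_Icc.mpr ⟨e1.1, e1.2⟩) b2 (Finset.mem_Icc.mpr ⟨e2.1, e2.2⟩) b3 (Finset.mem_Icc.mpr ⟨e3.1, e3.2⟩) b4 (Finset.mem_Icc.mpr ⟨e4.1, e4.2⟩) b5 (Finset.mem_Icc.mpr ⟨e5.1, e5.2⟩) b6 (Finset.mem_Icc.mpr ⟨e6.1, e6.2⟩) (by linarith)
  · -- a = 1
    have e1 := lm10 b1 (by linarith)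
    have e2 := lm10 b2 (by linarith)
    have e3 := lm10 b3 (by linarith)
    have e4 := lm10 b4 (by linarith)
    have e5 := lm10 b5 (by linarith)
    have e6 := lm10 b6 (by linarith)
    exact exc_dec1 b1 (Finset.mem_Icc.mpr ⟨e1.1, e1.2⟩) b2 (Finset.mem_Icc.mpr ⟨e2.1, e2.2⟩) b3 (Finset.mem_Icc.mpr ⟨e3.1, e3.2⟩) b4 (Finset.mem_Icc.mpr ⟨e4.1, e4.2⟩) b5 (Finset.mem_Icc.mpr ⟨e5.1, e5.2⟩) b6 (Finset.mem_Icc.mpr ⟨e6.1, e6.2⟩) (by linarith)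
  · -- a = 2
    have e1 := lm10 b1 (by linarith)
    have e2 := lm10 b2 (by linarith)
    have e3 := lm10 b3 (by linarith)
    have e4 := lm10 b4 (by linarith)
    have e5 := lm10 b5 (by linarith)
    have e6 := lm10 b6 (by linarith)
    exact exc_dec2 b1 (Finset.mem_Icc.mpr ⟨e1.1, e1.2⟩) b2 (Finset.mem_Icc.mpr ⟨e2.1, e2.2⟩) b3 (Finset.mem_Icc.mpr ⟨e3.1, e3.2⟩) b4 (Finset.mem_Icc.mpr ⟨e4.1, e4.2⟩) b5 (Finset.mem_Icc.mpr ⟨e5.1, e5.2⟩) b6 (Finset.mem_Icc.mpr ⟨e6.1, e6.2⟩) (by linarith)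

lemma exc_mem (l : Fin 7 → ℤ) (h : IsExc l) : l ∈ excL := by
  obtain ⟨h1, h2⟩ := h
  simp [form, kvec, Fin.sum_univ_seven] at h1 h2
  have hl : l = ![l 0, l 1, l 2, l 3, l 4, l 5, l 6] := by
    funext i; fin_cases i <;> rfl
  rw [hl]
  exact exc_key _ _ _ _ _ _ _ (by linarith) (by linarith)

set_option maxHeartbeats 1000000 in
lemma root_key (a b1 b2 b3 b4 b5 b6 : ℤ)
    (hq : b1*b1+b2*b2+b3*b3+b4*b4+b5*b5+b6*b6 = a*a+2) (hs : b1+b2+b3+b4+b5+b6 = -3*a) :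
    ![a,b1,b2,b3,b4,b5,b6] ∈ rootL := by
  have cs0 := cauchy6 b1 b2 b3 b4 b5 b6
  rw [hs, hq] at cs0
  have c3 : a*a ≤ 4 := by nlinarith [cs0]
  have ha0 : -2 ≤ a := by nlinarith [sq_nonneg (a+2)]
  have ha2 : a ≤ 2 := by nlinarith [sq_nonneg (a-2)]
  have s1 := sq_sub b1; have s2 := sq_sub b2; have s3 := sq_sub b3
  have s4 := sq_sub b4; have s5 := sq_sub b5; have s6 := sq_sub b6
  have t1 := sq_sub (-b1); have t2 := sq_sub (-b2); have t3 := sq_sub (-b3)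
  have t4 := sq_sub (-b4); have t5 := sq_sub (-b5); have t6 := sq_sub (-b6)
  interval_cases a
  · -- a = -2
    have e1 : b1 = 1 := by have := eq_neg_one_of (-b1) (by nlinarith [sq_nonneg (b2-1), sq_nonneg (b3-1), sq_nonneg (b4-1), sq_nonneg (b5-1), sq_nonneg (b6-1)]); omega
    have e2 : b2 = 1 := by have := eq_neg_one_of (-b2) (by nlinarith [sq_nonneg (b1-1), sq_nonneg (b3-1), sq_nonneg (b4-1), sq_nonneg (b5-1), sq_nonneg (b6-1)]); omega
    have e3 : b3 = 1 := by have := eq_neg_one_of (-b3) (by nlinarith [sq_nonneg (b1-1), sq_nonneg (b2-1), sq_nonneg (b4-1), sq_nonneg (b5-1), sq_nonneg (b6-1)]); omega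
    have e4 : b4 = 1 := by have := eq_neg_one_of (-b4) (by nlinarith [sq_nonneg (b1-1), sq_nonneg (b2-1), sq_nonneg (b3-1), sq_nonneg (b5-1), sq_nonneg (b6-1)]); omega
    have e5 : b5 = 1 := by have := eq_neg_one_of (-b5) (by nlinarith [sq_nonneg (b1-1), sq_nonneg (b2-1), sq_nonneg (b3-1), sq_nonneg (b4-1), sq_nonneg (b6-1)]); omega
    have e6 : b6 = 1 := by have := eq_neg_one_of (-b6) (by nlinarith [sq_nonneg (b1-1), sq_nonneg (b2-1), sq_nonneg (b3-1), sq_nonneg (b4-1), sq_nonneg (b5-1)]); omega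
    subst e1 e2 e3 e4 e5 e6
    decide
  · -- a = -1
    have e1 := l01 b1 (by linarith)
    have e2 := l01 b2 (by linarith)
    have e3 := l01 b3 (by linarith)
    have e4 := l01 b4 (by linarith)
    have e5 := l01 b5 (by linarith)
    have e6 := l01 b6 (by linarith)
    exact root_decm1 b1 (Finset.mem_Icc.mpr ⟨e1.1, e1.2⟩) b2 (Finset.mem_Icc.mpr ⟨e2.1, e2.2⟩) b3 (Finset.mem_Icc.mpr ⟨e3.1, e3.2⟩) b4 (Finset.mem_Icc.mpr ⟨e4.1, e4.2⟩) b5 (Finset.mem_Icc.mpr ⟨e5.1, e5.2⟩) b6 (Finset.mem_Icc.mpr ⟨e6.1, e6.2⟩) (by linarith)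
  · -- a = 0
    have e1 := sq_le2 b1 (by linarith [mul_self_nonneg b2, mul_self_nonneg b3, mul_self_nonneg b4, mul_self_nonneg b5, mul_self_nonneg b6])
    have e2 := sq_le2 b2 (by linarith [mul_self_nonneg b1, mul_self_nonneg b3, mul_self_nonneg b4, mul_self_nonneg b5, mul_self_nonneg b6])
    have e3 := sq_le2 b3 (by linarith [mul_self_nonneg b1, mul_self_nonneg b2, mul_self_nonneg b4, mul_self_nonneg b5, mul_self_nonneg b6])
    have e4 := sq_le2 b4 (by linarith [mul_self_nonneg b1, mul_self_nonneg b2, mul_self_nonneg b3, mul_self_nonneg b5, mul_self_nonneg b6])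
    have e5 := sq_le2 b5 (by linarith [mul_self_nonneg b1, mul_self_nonneg b2, mul_self_nonneg b3, mul_self_nonneg b4, mul_self_nonneg b6])
    have e6 := sq_le2 b6 (by linarith [mul_self_nonneg b1, mul_self_nonneg b2, mul_self_nonneg b3, mul_self_nonneg b4, mul_self_nonneg b5])
    exact root_dec0 b1 (Finset.mem_Icc.mpr ⟨e1.1, e1.2⟩) b2 (Finset.mem_Icc.mpr ⟨e2.1, e2.2⟩) b3 (Finset.mem_Icc.mpr ⟨e3.1, e3.2⟩) b4 (Finset.mem_Icc.mpr ⟨e4.1, e4.2⟩) b5 (Finset.mem_Icc.mpr ⟨e5.1, e5.2⟩) b6 (Finset.mem_Icc.mpr ⟨e6.1, e6.2⟩) (by linarith) (by linarith)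
  · -- a = 1
    have e1 := lm10 b1 (by linarith)
    have e2 := lm10 b2 (by linarith)
    have e3 := lm10 b3 (by linarith)
    have e4 := lm10 b4 (by linarith)
    have e5 := lm10 b5 (by linarith)
    have e6 := lm10 b6 (by linarith)
    exact root_dec1 b1 (Finset.mem_Icc.mpr ⟨e1.1, e1.2⟩) b2 (Finset.mem_Icc.mpr ⟨e2.1, e2.2⟩) b3 (Finset.mem_Icc.mpr ⟨e3.1, e3.2⟩) b4 (Finset.mem_Icc.mpr ⟨e4.1, e4.2⟩) b5 (Finset.mem_Icc.mpr ⟨e5.1, e5.2⟩) b6 (Finset.mem_Icc.mpr ⟨e6.1, e6.2⟩) (by linarith)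
  · -- a = 2
    have e1 : b1 = -1 := eq_neg_one_of b1 (by nlinarith [sq_nonneg (b2+1), sq_nonneg (b3+1), sq_nonneg (b4+1), sq_nonneg (b5+1), sq_nonneg (b6+1)])
    have e2 : b2 = -1 := eq_neg_one_of b2 (by nlinarith [sq_nonneg (b1+1), sq_nonneg (b3+1), sq_nonneg (b4+1), sq_nonneg (b5+1), sq_nonneg (b6+1)])
    have e3 : b3 = -1 := eq_neg_one_of b3 (by nlinarith [sq_nonneg (b1+1), sq_nonneg (b2+1), sq_nonneg (b4+1), sq_nonneg (b5+1), sq_nonneg (b6+1)])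
    have e4 : b4 = -1 := eq_neg_one_of b4 (by nlinarith [sq_nonneg (b1+1), sq_nonneg (b2+1), sq_nonneg (b3+1), sq_nonneg (b5+1), sq_nonneg (b6+1)])
    have e5 : b5 = -1 := eq_neg_one_of b5 (by nlinarith [sq_nonneg (b1+1), sq_nonneg (b2+1), sq_nonneg (b3+1), sq_nonneg (b4+1), sq_nonneg (b6+1)])
    have e6 : b6 = -1 := eq_neg_one_of b6 (by nlinarith [sq_nonneg (b1+1), sq_nonneg (b2+1), sq_nonneg (b3+1), sq_nonneg (b4+1), sq_nonneg (b5+1)])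
    subst e1 e2 e3 e4 e5 e6
    decide

lemma root_mem (r : Fin 7 → ℤ) (h : IsRoot r) : r ∈ rootL := by
  obtain ⟨h2, h1⟩ := h
  simp [form, kvec, Fin.sum_univ_seven] at h1 h2
  have hl : r = ![r 0, r 1, r 2, r 3, r 4, r 5, r 6] := by
    funext i; fin_cases i <;> rfl
  rw [hl]
  exact root_key _ _ _ _ _ _ _ (by linarith) (by linarith)

set_option maxHeartbeats 1000000 in
lemma exc_of_mem : ∀ l ∈ excL, IsExc l := by
  unfold IsExc
  decide

lemma set_eq (r : Fin 7 → ℤ) (c : ℤ) :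
    {l : Fin 7 → ℤ | IsExc l ∧ form r l = c} =
      ↑(excL.toFinset.filter (fun l => form r l = c)) := by
  ext l
  simp only [Set.mem_setOf_eq, Finset.coe_filter, Finset.mem_filter, List.mem_toFinset]
  exact ⟨fun ⟨h1,h2⟩ => ⟨exc_mem l h1, h2⟩, fun ⟨h1,h2⟩ => ⟨exc_of_mem l h1, h2⟩⟩

set_option maxHeartbeats 10000000 in
lemma main_dec : ∀ r ∈ rootL,
    (∀ l ∈ excL, form r l = -1 ∨ form r l = 0 ∨ form r l = 1) ∧
    (excL.toFinset.filter (fun l => form r l = 0)).card = 15 ∧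
    (excL.toFinset.filter (fun l => form r l = 1)).card = 6 ∧
    (excL.toFinset.filter (fun l => form r l = -1)).card = 6 := by decide

/-- For every root `r`, the pairing with any exceptional vector lies in `{-1,0,1}`;
exactly `15` exceptional vectors pair to `0`, exactly `6` pair to `1`,
and exactly `6` pair to `-1`. -/
theorem stmt_2 (r : Fin 7 → ℤ) (hr : IsRoot r) :
    (∀ l : Fin 7 → ℤ, IsExc l → form r l = -1 ∨ form r l = 0 ∨ form r l = 1) ∧
    {l : Fin 7 → ℤ | IsExc l ∧ form r l = 0}.ncard = 15 ∧
    {l : Fin 7 → ℤ | IsExc l ∧ form r l = 1}.ncard = 6 ∧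
    {l : Fin 7 → ℤ | IsExc l ∧ form r l = -1}.ncard = 6 := by
  obtain ⟨m1, m2, m3, m4⟩ := main_dec r (root_mem r hr)
  refine ⟨fun l hl => m1 l (exc_mem l hl), ?_, ?_, ?_⟩ <;>
    rw [set_eq, Set.ncard_coe_finset]
  exacts [m2, m3, m4]
end

section
/- For every root $r$, the reflection $s_r(x)=x+\langle x,r\rangle r$ preserves the bilinear form, fixes $k$, and maps the set $L$ of exceptional vectors bijectively onto itself; the induced permutation of $L$ is an involution whose fixed points are exactly the $15$ exceptional vectors orthogonal to $r$, so that, viewed as an element of the symmetric group on the $27$ exceptional vectors, $s_r$ is a product of $6$ disjoint transpositions. -/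
/-- The reflection in a root `r`, as a plain function: `x ↦ x + ⟨x,r⟩ r`. -/
def reflFun (r : Fin 7 → ℤ) (x : Fin 7 → ℤ) : Fin 7 → ℤ := x + form x r • r

-- ===== auxiliary material =====

@[simp] lemma cv0 {α : Type*} (a b c d e f g : α) : ![a,b,c,d,e,f,g] 0 = a := rfl
@[simp] lemma cv1 {α : Type*} (a b c d e f g : α) : ![a,b,c,d,e,f,g] 1 = b := rfl
@[simp] lemma cv2 {α : Type*} (a b c d e f g : α) : ![a,b,c,d,e,f,g] 2 = c := rfl
@[simp] lemma cv3 {α : Type*} (a b c d e f g : α) : ![a,b,c,d,e,f,g] 3 = d := rfl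
@[simp] lemma cv4 {α : Type*} (a b c d e f g : α) : ![a,b,c,d,e,f,g] 4 = e := rfl
@[simp] lemma cv5 {α : Type*} (a b c d e f g : α) : ![a,b,c,d,e,f,g] 5 = f := rfl
@[simp] lemma cv6 {α : Type*} (a b c d e f g : α) : ![a,b,c,d,e,f,g] 6 = g := rfl

@[simp] lemma kv0 : kvec 0 = -3 := rfl
@[simp] lemma kv1 : kvec 1 = 1 := rfl
@[simp] lemma kv2 : kvec 2 = 1 := rfl
@[simp] lemma kv3 : kvec 3 = 1 := rfl
@[simp] lemma kv4 : kvec 4 = 1 := rfl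
@[simp] lemma kv5 : kvec 5 = 1 := rfl
@[simp] lemma kv6 : kvec 6 = 1 := rfl

lemma form_comm (x y : Fin 7 → ℤ) : form x y = form y x := by
  simp only [form, Fin.sum_univ_seven]; ring

lemma form_expand (r x y : Fin 7 → ℤ) (a b : ℤ) :
    form (x + a • r) (y + b • r)
      = form x y + b * form x r + a * form r y + a * b * form r r := by
  simp only [form, Fin.sum_univ_seven, Pi.add_apply, Pi.smul_apply, smul_eq_mul]; ring

lemma form_add_left (x y z : Fin 7 → ℤ) : form (x + y) z = form x z + form y z := by
  simp only [form, Fin.sum_univ_seven, Pi.add_apply]; ring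

lemma form_smul_left (a : ℤ) (x y : Fin 7 → ℤ) : form (a • x) y = a * form x y := by
  simp only [form, Fin.sum_univ_seven, Pi.smul_apply, smul_eq_mul]; ring

lemma form_add_right (x y z : Fin 7 → ℤ) : form x (y + z) = form x y + form x z := by
  simp only [form, Fin.sum_univ_seven, Pi.add_apply]; ring

lemma form_smul_right (a : ℤ) (x y : Fin 7 → ℤ) : form x (a • y) = a * form x y := by
  simp only [form, Fin.sum_univ_seven, Pi.smul_apply, smul_eq_mul]; ring

lemma refl_preserves (r : Fin 7 → ℤ) (hr2 : form r r = -2) (x y : Fin 7 → ℤ) :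
    form (reflFun r x) (reflFun r y) = form x y := by
  simp only [reflFun]
  rw [form_expand, form_comm r y, hr2]; ring

lemma refl_invol (r : Fin 7 → ℤ) (hr2 : form r r = -2) (x : Fin 7 → ℤ) :
    reflFun r (reflFun r x) = x := by
  have h1 : form (reflFun r x) r = - form x r := by
    rw [reflFun, form_add_left, form_smul_left, hr2]; ring
  show reflFun r x + form (reflFun r x) r • r = x
  rw [h1, reflFun, neg_smul, add_neg_cancel_right]

lemma refl_k (r : Fin 7 → ℤ) (hr1 : form r kvec = 0) : reflFun r kvec = kvec := by
  rw [reflFun, form_comm, hr1, zero_smul, add_zero]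

lemma fix_iff (r : Fin 7 → ℤ) (hr : IsRoot r) (l : Fin 7 → ℤ) :
    reflFun r l = l ↔ form r l = 0 := by
  constructor
  · intro h
    rw [reflFun] at h
    have h2 : form l r • r = 0 := add_eq_left.mp h
    rcases smul_eq_zero.mp h2 with h3 | h3
    · rw [form_comm]; exact h3
    · exfalso
      have h4 := hr.2
      rw [h3] at h4
      simp [form] at h4
  · intro h
    rw [reflFun, form_comm l r, h, zero_smul, add_zero]

lemma negdef (x : Fin 7 → ℤ) (hx : form x kvec = 0) : form x x ≤ 0 := by
  simp only [form, Fin.sum_univ_seven, kv0, kv1, kv2, kv3, kv4, kv5, kv6] at hx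
  have hk : x 1 + x 2 + x 3 + x 4 + x 5 + x 6 = -3 * x 0 := by linarith
  have hk2 : (x 1 + x 2 + x 3 + x 4 + x 5 + x 6)^2 = (-3 * x 0)^2 := by rw [hk]
  simp only [form, Fin.sum_univ_seven]
  nlinarith [hk2, sq_nonneg (x 0),
    sq_nonneg (x 1 - x 2), sq_nonneg (x 1 - x 3), sq_nonneg (x 1 - x 4),
    sq_nonneg (x 1 - x 5), sq_nonneg (x 1 - x 6), sq_nonneg (x 2 - x 3),
    sq_nonneg (x 2 - x 4), sq_nonneg (x 2 - x 5), sq_nonneg (x 2 - x 6),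
    sq_nonneg (x 3 - x 4), sq_nonneg (x 3 - x 5), sq_nonneg (x 3 - x 6),
    sq_nonneg (x 4 - x 5), sq_nonneg (x 4 - x 6), sq_nonneg (x 5 - x 6)]

lemma form_kk : form kvec kvec = 3 := by decide

lemma bound (r l : Fin 7 → ℤ) (hr : IsRoot r) (hl : IsExc l) :
    -1 ≤ form r l ∧ form r l ≤ 1 := by
  obtain ⟨hr1, hr2⟩ := hr
  obtain ⟨hl1, hl2⟩ := hl
  have hlr : form l r = form r l := form_comm l r
  have hkr : form kvec r = 0 := (form_comm kvec r).trans hr1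
  have hkl : form kvec l = -1 := (form_comm kvec l).trans hl2
  constructor
  · have hy : form ((3:ℤ) • l + kvec + (-3:ℤ) • r) kvec = 0 := by
      simp only [form_add_left, form_smul_left, hl2, hr1, form_kk]
      norm_num
    have h2 := negdef _ hy
    simp only [form_add_left, form_add_right, form_smul_left, form_smul_right,
      hl1, hl2, hkl, hkr, hlr, hr1, hr2, form_kk] at h2
    linarith
  · have hy : form ((3:ℤ) • l + kvec + (3:ℤ) • r) kvec = 0 := by
      simp only [form_add_left, form_smul_left, hl2, hr1, form_kk]
      norm_num
    have h2 := negdef _ hy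
    simp only [form_add_left, form_add_right, form_smul_left, form_smul_right,
      hl1, hl2, hkl, hkr, hlr, hr1, hr2, form_kk] at h2
    linarith

/-- The 27 exceptional vectors. -/
def vex : Fin 27 → Fin 7 → ℤ :=
  ![![0,1,0,0,0,0,0],
    ![0,0,1,0,0,0,0],
    ![0,0,0,1,0,0,0],
    ![0,0,0,0,1,0,0],
    ![0,0,0,0,0,1,0],
    ![0,0,0,0,0,0,1],
    ![1,-1,-1,0,0,0,0],
    ![1,-1,0,-1,0,0,0],
    ![1,-1,0,0,-1,0,0],
    ![1,-1,0,0,0,-1,0],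
    ![1,-1,0,0,0,0,-1],
    ![1,0,-1,-1,0,0,0],
    ![1,0,-1,0,-1,0,0],
    ![1,0,-1,0,0,-1,0],
    ![1,0,-1,0,0,0,-1],
    ![1,0,0,-1,-1,0,0],
    ![1,0,0,-1,0,-1,0],
    ![1,0,0,-1,0,0,-1],
    ![1,0,0,0,-1,-1,0],
    ![1,0,0,0,-1,0,-1],
    ![1,0,0,0,0,-1,-1],
    ![2,0,-1,-1,-1,-1,-1],
    ![2,-1,0,-1,-1,-1,-1],
    ![2,-1,-1,0,-1,-1,-1],
    ![2,-1,-1,-1,0,-1,-1],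
    ![2,-1,-1,-1,-1,0,-1],
    ![2,-1,-1,-1,-1,-1,0]]

lemma eq_vec {α : Type*} (l : Fin 7 → α) (a b c d e f g : α)
    (h0 : l 0 = a) (h1 : l 1 = b) (h2 : l 2 = c) (h3 : l 3 = d)
    (h4 : l 4 = e) (h5 : l 5 = f) (h6 : l 6 = g) : l = ![a,b,c,d,e,f,g] := by
  funext i
  fin_cases i
  exacts [h0, h1, h2, h3, h4, h5, h6]

lemma exc_vex (j : Fin 27) : IsExc (vex j) :=
  ⟨by revert j; decide, by revert j; decide⟩

lemma vex_inj : Function.Injective vex := by decide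

lemma sqcases (b : ℤ) (h1 : -2 ≤ b) (h2 : b ≤ 2) :
    (b = -2 ∧ b * b = 4) ∨ (b = -1 ∧ b * b = 1) ∨ (b = 0 ∧ b * b = 0) ∨
    (b = 1 ∧ b * b = 1) ∨ (b = 2 ∧ b * b = 4) := by
  interval_cases b <;> norm_num

lemma acases (b : ℤ) (h1 : 0 ≤ b) (h2 : b ≤ 2) :
    (b = 0 ∧ b * b = 0) ∨ (b = 1 ∧ b * b = 1) ∨ (b = 2 ∧ b * b = 4) := by
  interval_cases b <;> norm_num

lemma sumsq (x : Fin 7 → ℤ) :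
    ∑ j : Fin 27, (form x (vex j))^2 = -6 * form x x + 5 * (form x kvec)^2 := by
  simp only [vex, Fin.sum_univ_succ, Fin.sum_univ_zero, Matrix.cons_val_zero,
    Matrix.cons_val_succ]
  simp only [form, Fin.sum_univ_seven, kv0, kv1, kv2, kv3, kv4, kv5, kv6,
    cv0, cv1, cv2, cv3, cv4, cv5, cv6]
  ring

lemma quadfacts (b : ℤ) : b ≤ b*b ∧ -b ≤ b*b ∧ 2*b - 1 ≤ b*b ∧ -2*b - 1 ≤ b*b := by
  refine ⟨?_, ?_, by nlinarith [sq_nonneg (b-1)], by nlinarith [sq_nonneg (b+1)]⟩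
  · rcases le_or_gt b 0 with h|h
    · nlinarith [sq_nonneg b]
    · nlinarith [mul_nonneg (by linarith : (0:ℤ) ≤ b) (by linarith : (0:ℤ) ≤ b - 1)]
  · rcases le_or_gt 0 b with h|h
    · nlinarith [sq_nonneg b]
    · nlinarith [mul_nonneg (by linarith : (0:ℤ) ≤ -b) (by linarith : (0:ℤ) ≤ -b + 1)]

lemma int01 (b : ℤ) (h1 : -1 ≤ b) (h2 : b ≤ 0) : b = -1 ∨ b = 0 := by omega

lemma int01' (b : ℤ) (h1 : 0 ≤ b) (h2 : b ≤ 1) : b = 0 ∨ b = 1 := by omega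

lemma case0_s3 (b1 b2 b3 b4 b5 b6 t1 t2 t3 t4 t5 t6 : ℤ)
 (q1 : b1 ≤ t1 ∧ -b1 ≤ t1 ∧ 2*b1 - 1 ≤ t1 ∧ -2*b1 - 1 ≤ t1)
 (q2 : b2 ≤ t2 ∧ -b2 ≤ t2 ∧ 2*b2 - 1 ≤ t2 ∧ -2*b2 - 1 ≤ t2)
 (q3 : b3 ≤ t3 ∧ -b3 ≤ t3 ∧ 2*b3 - 1 ≤ t3 ∧ -2*b3 - 1 ≤ t3)
 (q4 : b4 ≤ t4 ∧ -b4 ≤ t4 ∧ 2*b4 - 1 ≤ t4 ∧ -2*b4 - 1 ≤ t4)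
 (q5 : b5 ≤ t5 ∧ -b5 ≤ t5 ∧ 2*b5 - 1 ≤ t5 ∧ -2*b5 - 1 ≤ t5)
 (q6 : b6 ≤ t6 ∧ -b6 ≤ t6 ∧ 2*b6 - 1 ≤ t6 ∧ -2*b6 - 1 ≤ t6)
 (H1 : t1+t2+t3+t4+t5+t6 = 1) (H2 : b1+b2+b3+b4+b5+b6 = 1) :
 (b1 = 1 ∧ b2 = 0 ∧ b3 = 0 ∧ b4 = 0 ∧ b5 = 0 ∧ b6 = 0) ∨
 (b1 = 0 ∧ b2 = 1 ∧ b3 = 0 ∧ b4 = 0 ∧ b5 = 0 ∧ b6 = 0) ∨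
 (b1 = 0 ∧ b2 = 0 ∧ b3 = 1 ∧ b4 = 0 ∧ b5 = 0 ∧ b6 = 0) ∨
 (b1 = 0 ∧ b2 = 0 ∧ b3 = 0 ∧ b4 = 1 ∧ b5 = 0 ∧ b6 = 0) ∨
 (b1 = 0 ∧ b2 = 0 ∧ b3 = 0 ∧ b4 = 0 ∧ b5 = 1 ∧ b6 = 0) ∨
 (b1 = 0 ∧ b2 = 0 ∧ b3 = 0 ∧ b4 = 0 ∧ b5 = 0 ∧ b6 = 1) := by
  have e1 := int01' b1 (by linarith [q1.1, q1.2.1, q2.1, q3.1, q4.1, q5.1, q6.1])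
                       (by linarith [q1.1, q1.2.1, q1.2.2.1, q2.1, q3.1, q4.1, q5.1, q6.1])
  have e2 := int01' b2 (by linarith [q2.1, q2.2.1, q1.1, q3.1, q4.1, q5.1, q6.1])
                       (by linarith [q2.1, q2.2.1, q2.2.2.1, q1.1, q3.1, q4.1, q5.1, q6.1])
  have e3 := int01' b3 (by linarith [q3.1, q3.2.1, q1.1, q2.1, q4.1, q5.1, q6.1])
                       (by linarith [q3.1, q3.2.1, q3.2.2.1, q1.1, q2.1, q4.1, q5.1, q6.1])
  have e4 := int01' b4 (by linarith [q4.1, q4.2.1, q1.1, q2.1, q3.1, q5.1, q6.1])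
                       (by linarith [q4.1, q4.2.1, q4.2.2.1, q1.1, q2.1, q3.1, q5.1, q6.1])
  have e5 := int01' b5 (by linarith [q5.1, q5.2.1, q1.1, q2.1, q3.1, q4.1, q6.1])
                       (by linarith [q5.1, q5.2.1, q5.2.2.1, q1.1, q2.1, q3.1, q4.1, q6.1])
  have e6 := int01' b6 (by linarith [q6.1, q6.2.1, q1.1, q2.1, q3.1, q4.1, q5.1])
                       (by linarith [q6.1, q6.2.1, q6.2.2.1, q1.1, q2.1, q3.1, q4.1, q5.1])
  clear q1 q2 q3 q4 q5 q6 H1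
  rcases e1 with rfl|rfl <;> rcases e2 with rfl|rfl <;> rcases e3 with rfl|rfl <;>
    rcases e4 with rfl|rfl <;> rcases e5 with rfl|rfl <;> rcases e6 with rfl|rfl <;>
    revert H2 <;> norm_num

lemma case1_s3 (b1 b2 b3 b4 b5 b6 t1 t2 t3 t4 t5 t6 : ℤ)
 (q1 : b1 ≤ t1 ∧ -b1 ≤ t1 ∧ 2*b1 - 1 ≤ t1 ∧ -2*b1 - 1 ≤ t1)
 (q2 : b2 ≤ t2 ∧ -b2 ≤ t2 ∧ 2*b2 - 1 ≤ t2 ∧ -2*b2 - 1 ≤ t2)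
 (q3 : b3 ≤ t3 ∧ -b3 ≤ t3 ∧ 2*b3 - 1 ≤ t3 ∧ -2*b3 - 1 ≤ t3)
 (q4 : b4 ≤ t4 ∧ -b4 ≤ t4 ∧ 2*b4 - 1 ≤ t4 ∧ -2*b4 - 1 ≤ t4)
 (q5 : b5 ≤ t5 ∧ -b5 ≤ t5 ∧ 2*b5 - 1 ≤ t5 ∧ -2*b5 - 1 ≤ t5)
 (q6 : b6 ≤ t6 ∧ -b6 ≤ t6 ∧ 2*b6 - 1 ≤ t6 ∧ -2*b6 - 1 ≤ t6)
 (H1 : t1+t2+t3+t4+t5+t6 = 2) (H2 : b1+b2+b3+b4+b5+b6 = -2) :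
 (b1 = -1 ∧ b2 = -1 ∧ b3 = 0 ∧ b4 = 0 ∧ b5 = 0 ∧ b6 = 0) ∨
 (b1 = -1 ∧ b2 = 0 ∧ b3 = -1 ∧ b4 = 0 ∧ b5 = 0 ∧ b6 = 0) ∨
 (b1 = -1 ∧ b2 = 0 ∧ b3 = 0 ∧ b4 = -1 ∧ b5 = 0 ∧ b6 = 0) ∨
 (b1 = -1 ∧ b2 = 0 ∧ b3 = 0 ∧ b4 = 0 ∧ b5 = -1 ∧ b6 = 0) ∨
 (b1 = -1 ∧ b2 = 0 ∧ b3 = 0 ∧ b4 = 0 ∧ b5 = 0 ∧ b6 = -1) ∨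
 (b1 = 0 ∧ b2 = -1 ∧ b3 = -1 ∧ b4 = 0 ∧ b5 = 0 ∧ b6 = 0) ∨
 (b1 = 0 ∧ b2 = -1 ∧ b3 = 0 ∧ b4 = -1 ∧ b5 = 0 ∧ b6 = 0) ∨
 (b1 = 0 ∧ b2 = -1 ∧ b3 = 0 ∧ b4 = 0 ∧ b5 = -1 ∧ b6 = 0) ∨
 (b1 = 0 ∧ b2 = -1 ∧ b3 = 0 ∧ b4 = 0 ∧ b5 = 0 ∧ b6 = -1) ∨
 (b1 = 0 ∧ b2 = 0 ∧ b3 = -1 ∧ b4 = -1 ∧ b5 = 0 ∧ b6 = 0) ∨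
 (b1 = 0 ∧ b2 = 0 ∧ b3 = -1 ∧ b4 = 0 ∧ b5 = -1 ∧ b6 = 0) ∨
 (b1 = 0 ∧ b2 = 0 ∧ b3 = -1 ∧ b4 = 0 ∧ b5 = 0 ∧ b6 = -1) ∨
 (b1 = 0 ∧ b2 = 0 ∧ b3 = 0 ∧ b4 = -1 ∧ b5 = -1 ∧ b6 = 0) ∨
 (b1 = 0 ∧ b2 = 0 ∧ b3 = 0 ∧ b4 = -1 ∧ b5 = 0 ∧ b6 = -1) ∨
 (b1 = 0 ∧ b2 = 0 ∧ b3 = 0 ∧ b4 = 0 ∧ b5 = -1 ∧ b6 = -1) := by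
  have e1 := int01 b1 (by linarith [q1.1, q1.2.1, q1.2.2.2, q2.2.1, q3.2.1, q4.2.1, q5.2.1, q6.2.1])
                      (by linarith [q1.1, q1.2.1, q2.2.1, q3.2.1, q4.2.1, q5.2.1, q6.2.1])
  have e2 := int01 b2 (by linarith [q2.1, q2.2.1, q2.2.2.2, q1.2.1, q3.2.1, q4.2.1, q5.2.1, q6.2.1])
                      (by linarith [q2.1, q2.2.1, q1.2.1, q3.2.1, q4.2.1, q5.2.1, q6.2.1])
  have e3 := int01 b3 (by linarith [q3.1, q3.2.1, q3.2.2.2, q1.2.1, q2.2.1, q4.2.1, q5.2.1, q6.2.1])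
                      (by linarith [q3.1, q3.2.1, q1.2.1, q2.2.1, q4.2.1, q5.2.1, q6.2.1])
  have e4 := int01 b4 (by linarith [q4.1, q4.2.1, q4.2.2.2, q1.2.1, q2.2.1, q3.2.1, q5.2.1, q6.2.1])
                      (by linarith [q4.1, q4.2.1, q1.2.1, q2.2.1, q3.2.1, q5.2.1, q6.2.1])
  have e5 := int01 b5 (by linarith [q5.1, q5.2.1, q5.2.2.2, q1.2.1, q2.2.1, q3.2.1, q4.2.1, q6.2.1])
                      (by linarith [q5.1, q5.2.1, q1.2.1, q2.2.1, q3.2.1, q4.2.1, q6.2.1])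
  have e6 := int01 b6 (by linarith [q6.1, q6.2.1, q6.2.2.2, q1.2.1, q2.2.1, q3.2.1, q4.2.1, q5.2.1])
                      (by linarith [q6.1, q6.2.1, q1.2.1, q2.2.1, q3.2.1, q4.2.1, q5.2.1])
  clear q1 q2 q3 q4 q5 q6 H1
  rcases e1 with rfl|rfl <;> rcases e2 with rfl|rfl <;> rcases e3 with rfl|rfl <;>
    rcases e4 with rfl|rfl <;> rcases e5 with rfl|rfl <;> rcases e6 with rfl|rfl <;>
    revert H2 <;> norm_num

lemma case2_s3 (b1 b2 b3 b4 b5 b6 t1 t2 t3 t4 t5 t6 : ℤ)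
 (q1 : b1 ≤ t1 ∧ -b1 ≤ t1 ∧ 2*b1 - 1 ≤ t1 ∧ -2*b1 - 1 ≤ t1)
 (q2 : b2 ≤ t2 ∧ -b2 ≤ t2 ∧ 2*b2 - 1 ≤ t2 ∧ -2*b2 - 1 ≤ t2)
 (q3 : b3 ≤ t3 ∧ -b3 ≤ t3 ∧ 2*b3 - 1 ≤ t3 ∧ -2*b3 - 1 ≤ t3)
 (q4 : b4 ≤ t4 ∧ -b4 ≤ t4 ∧ 2*b4 - 1 ≤ t4 ∧ -2*b4 - 1 ≤ t4)
 (q5 : b5 ≤ t5 ∧ -b5 ≤ t5 ∧ 2*b5 - 1 ≤ t5 ∧ -2*b5 - 1 ≤ t5)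
 (q6 : b6 ≤ t6 ∧ -b6 ≤ t6 ∧ 2*b6 - 1 ≤ t6 ∧ -2*b6 - 1 ≤ t6)
 (H1 : t1+t2+t3+t4+t5+t6 = 5) (H2 : b1+b2+b3+b4+b5+b6 = -5) :
 (b1 = 0 ∧ b2 = -1 ∧ b3 = -1 ∧ b4 = -1 ∧ b5 = -1 ∧ b6 = -1) ∨
 (b1 = -1 ∧ b2 = 0 ∧ b3 = -1 ∧ b4 = -1 ∧ b5 = -1 ∧ b6 = -1) ∨
 (b1 = -1 ∧ b2 = -1 ∧ b3 = 0 ∧ b4 = -1 ∧ b5 = -1 ∧ b6 = -1) ∨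
 (b1 = -1 ∧ b2 = -1 ∧ b3 = -1 ∧ b4 = 0 ∧ b5 = -1 ∧ b6 = -1) ∨
 (b1 = -1 ∧ b2 = -1 ∧ b3 = -1 ∧ b4 = -1 ∧ b5 = 0 ∧ b6 = -1) ∨
 (b1 = -1 ∧ b2 = -1 ∧ b3 = -1 ∧ b4 = -1 ∧ b5 = -1 ∧ b6 = 0) := by
  have e1 := int01 b1 (by linarith [q1.1, q1.2.1, q1.2.2.2, q2.2.1, q3.2.1, q4.2.1, q5.2.1, q6.2.1])
                      (by linarith [q1.1, q1.2.1, q2.2.1, q3.2.1, q4.2.1, q5.2.1, q6.2.1])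
  have e2 := int01 b2 (by linarith [q2.1, q2.2.1, q2.2.2.2, q1.2.1, q3.2.1, q4.2.1, q5.2.1, q6.2.1])
                      (by linarith [q2.1, q2.2.1, q1.2.1, q3.2.1, q4.2.1, q5.2.1, q6.2.1])
  have e3 := int01 b3 (by linarith [q3.1, q3.2.1, q3.2.2.2, q1.2.1, q2.2.1, q4.2.1, q5.2.1, q6.2.1])
                      (by linarith [q3.1, q3.2.1, q1.2.1, q2.2.1, q4.2.1, q5.2.1, q6.2.1])
  have e4 := int01 b4 (by linarith [q4.1, q4.2.1, q4.2.2.2, q1.2.1, q2.2.1, q3.2.1, q5.2.1, q6.2.1])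
                      (by linarith [q4.1, q4.2.1, q1.2.1, q2.2.1, q3.2.1, q5.2.1, q6.2.1])
  have e5 := int01 b5 (by linarith [q5.1, q5.2.1, q5.2.2.2, q1.2.1, q2.2.1, q3.2.1, q4.2.1, q6.2.1])
                      (by linarith [q5.1, q5.2.1, q1.2.1, q2.2.1, q3.2.1, q4.2.1, q6.2.1])
  have e6 := int01 b6 (by linarith [q6.1, q6.2.1, q6.2.2.2, q1.2.1, q2.2.1, q3.2.1, q4.2.1, q5.2.1])
                      (by linarith [q6.1, q6.2.1, q1.2.1, q2.2.1, q3.2.1, q4.2.1, q5.2.1])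
  clear q1 q2 q3 q4 q5 q6 H1
  rcases e1 with rfl|rfl <;> rcases e2 with rfl|rfl <;> rcases e3 with rfl|rfl <;>
    rcases e4 with rfl|rfl <;> rcases e5 with rfl|rfl <;> rcases e6 with rfl|rfl <;>
    revert H2 <;> norm_num

set_option maxHeartbeats 1000000 in
lemma classify (l : Fin 7 → ℤ) (hl : IsExc l) : ∃ j : Fin 27, l = vex j := by
  obtain ⟨h1, h2⟩ := hl
  simp only [form, Fin.sum_univ_seven, kv0, kv1, kv2, kv3, kv4, kv5, kv6] at h1 h2
  have H1 : l 0 * l 0 + 1 = l 1 * l 1 + l 2 * l 2 + l 3 * l 3 + l 4 * l 4 + l 5 * l 5 + l 6 * l 6 := by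
    linarith
  have H2 : l 1 + l 2 + l 3 + l 4 + l 5 + l 6 = 1 - 3 * l 0 := by linarith
  clear h1 h2
  have H2sq : (l 1 + l 2 + l 3 + l 4 + l 5 + l 6)^2 = (1 - 3 * l 0)^2 := by rw [H2]
  have key : 6*(l 1 * l 1 + l 2 * l 2 + l 3 * l 3 + l 4 * l 4 + l 5 * l 5 + l 6 * l 6)
      - (l 1 + l 2 + l 3 + l 4 + l 5 + l 6)^2
      = (l 1 - l 2)^2 + (l 1 - l 3)^2 + (l 1 - l 4)^2 + (l 1 - l 5)^2 + (l 1 - l 6)^2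
      + (l 2 - l 3)^2 + (l 2 - l 4)^2 + (l 2 - l 5)^2 + (l 2 - l 6)^2
      + (l 3 - l 4)^2 + (l 3 - l 5)^2 + (l 3 - l 6)^2
      + (l 4 - l 5)^2 + (l 4 - l 6)^2 + (l 5 - l 6)^2 := by ring
  have pos : (0:ℤ) ≤ (l 1 - l 2)^2 + (l 1 - l 3)^2 + (l 1 - l 4)^2 + (l 1 - l 5)^2 + (l 1 - l 6)^2
      + (l 2 - l 3)^2 + (l 2 - l 4)^2 + (l 2 - l 5)^2 + (l 2 - l 6)^2
      + (l 3 - l 4)^2 + (l 3 - l 5)^2 + (l 3 - l 6)^2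
      + (l 4 - l 5)^2 + (l 4 - l 6)^2 + (l 5 - l 6)^2 := by positivity
  have hA : 3 * (l 0 * l 0) - 6 * l 0 - 5 ≤ 0 := by linarith [H1, H2sq, key, pos]
  have ha0 : 0 ≤ l 0 := by
    have h' : (-1:ℤ) < l 0 := by linarith [hA, sq_nonneg (l 0 + 2)]
    omega
  have ha2 : l 0 ≤ 2 := by
    have h' : l 0 < 3 := by linarith [hA, sq_nonneg (l 0 - 3)]
    omega
  clear H2sq key pos
  have qf1 := quadfacts (l 1)
  have qf2 := quadfacts (l 2)
  have qf3 := quadfacts (l 3)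
  have qf4 := quadfacts (l 4)
  have qf5 := quadfacts (l 5)
  have qf6 := quadfacts (l 6)
  obtain ⟨t1, ht1⟩ : ∃ t, l 1 * l 1 = t := ⟨_, rfl⟩
  rw [ht1] at H1 qf1
  obtain ⟨t2, ht2⟩ : ∃ t, l 2 * l 2 = t := ⟨_, rfl⟩
  rw [ht2] at H1 qf2
  obtain ⟨t3, ht3⟩ : ∃ t, l 3 * l 3 = t := ⟨_, rfl⟩
  rw [ht3] at H1 qf3
  obtain ⟨t4, ht4⟩ : ∃ t, l 4 * l 4 = t := ⟨_, rfl⟩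
  rw [ht4] at H1 qf4
  obtain ⟨t5, ht5⟩ : ∃ t, l 5 * l 5 = t := ⟨_, rfl⟩
  rw [ht5] at H1 qf5
  obtain ⟨t6, ht6⟩ : ∃ t, l 6 * l 6 = t := ⟨_, rfl⟩
  rw [ht6] at H1 qf6
  rcases acases (l 0) ha0 ha2 with ⟨ha, hta⟩|⟨ha, hta⟩|⟨ha, hta⟩
  · have hc := case0_s3 (l 1) (l 2) (l 3) (l 4) (l 5) (l 6) t1 t2 t3 t4 t5 t6
      qf1 qf2 qf3 qf4 qf5 qf6 (by linarith [H1, hta]) (by linarith [H2, ha])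
    rcases hc with ⟨e1,e2,e3,e4,e5,e6⟩|⟨e1,e2,e3,e4,e5,e6⟩|⟨e1,e2,e3,e4,e5,e6⟩|⟨e1,e2,e3,e4,e5,e6⟩|⟨e1,e2,e3,e4,e5,e6⟩|⟨e1,e2,e3,e4,e5,e6⟩
    · exact ⟨0, eq_vec l _ _ _ _ _ _ _ ha e1 e2 e3 e4 e5 e6⟩
    · exact ⟨1, eq_vec l _ _ _ _ _ _ _ ha e1 e2 e3 e4 e5 e6⟩
    · exact ⟨2, eq_vec l _ _ _ _ _ _ _ ha e1 e2 e3 e4 e5 e6⟩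
    · exact ⟨3, eq_vec l _ _ _ _ _ _ _ ha e1 e2 e3 e4 e5 e6⟩
    · exact ⟨4, eq_vec l _ _ _ _ _ _ _ ha e1 e2 e3 e4 e5 e6⟩
    · exact ⟨5, eq_vec l _ _ _ _ _ _ _ ha e1 e2 e3 e4 e5 e6⟩
  · have hc := case1_s3 (l 1) (l 2) (l 3) (l 4) (l 5) (l 6) t1 t2 t3 t4 t5 t6
      qf1 qf2 qf3 qf4 qf5 qf6 (by linarith [H1, hta]) (by linarith [H2, ha])
    rcases hc with ⟨e1,e2,e3,e4,e5,e6⟩|⟨e1,e2,e3,e4,e5,e6⟩|⟨e1,e2,e3,e4,e5,e6⟩|⟨e1,e2,e3,e4,e5,e6⟩|⟨e1,e2,e3,e4,e5,e6⟩|⟨e1,e2,e3,e4,e5,e6⟩|⟨e1,e2,e3,e4,e5,e6⟩|⟨e1,e2,e3,e4,e5,e6⟩|⟨e1,e2,e3,e4,e5,e6⟩|⟨e1,e2,e3,e4,e5,e6⟩|⟨e1,e2,e3,e4,e5,e6⟩|⟨e1,e2,e3,e4,e5,e6⟩|⟨e1,e2,e3,e4,e5,e6⟩|⟨e1,e2,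e3,e4,e5,e6⟩|⟨e1,e2,e3,e4,e5,e6⟩
    · exact ⟨6, eq_vec l _ _ _ _ _ _ _ ha e1 e2 e3 e4 e5 e6⟩
    · exact ⟨7, eq_vec l _ _ _ _ _ _ _ ha e1 e2 e3 e4 e5 e6⟩
    · exact ⟨8, eq_vec l _ _ _ _ _ _ _ ha e1 e2 e3 e4 e5 e6⟩
    · exact ⟨9, eq_vec l _ _ _ _ _ _ _ ha e1 e2 e3 e4 e5 e6⟩
    · exact ⟨10, eq_vec l _ _ _ _ _ _ _ ha e1 e2 e3 e4 e5 e6⟩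
    · exact ⟨11, eq_vec l _ _ _ _ _ _ _ ha e1 e2 e3 e4 e5 e6⟩
    · exact ⟨12, eq_vec l _ _ _ _ _ _ _ ha e1 e2 e3 e4 e5 e6⟩
    · exact ⟨13, eq_vec l _ _ _ _ _ _ _ ha e1 e2 e3 e4 e5 e6⟩
    · exact ⟨14, eq_vec l _ _ _ _ _ _ _ ha e1 e2 e3 e4 e5 e6⟩
    · exact ⟨15, eq_vec l _ _ _ _ _ _ _ ha e1 e2 e3 e4 e5 e6⟩
    · exact ⟨16, eq_vec l _ _ _ _ _ _ _ ha e1 e2 e3 e4 e5 e6⟩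
    · exact ⟨17, eq_vec l _ _ _ _ _ _ _ ha e1 e2 e3 e4 e5 e6⟩
    · exact ⟨18, eq_vec l _ _ _ _ _ _ _ ha e1 e2 e3 e4 e5 e6⟩
    · exact ⟨19, eq_vec l _ _ _ _ _ _ _ ha e1 e2 e3 e4 e5 e6⟩
    · exact ⟨20, eq_vec l _ _ _ _ _ _ _ ha e1 e2 e3 e4 e5 e6⟩
  · have hc := case2_s3 (l 1) (l 2) (l 3) (l 4) (l 5) (l 6) t1 t2 t3 t4 t5 t6
      qf1 qf2 qf3 qf4 qf5 qf6 (by linarith [H1, hta]) (by linarith [H2, ha])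
    rcases hc with ⟨e1,e2,e3,e4,e5,e6⟩|⟨e1,e2,e3,e4,e5,e6⟩|⟨e1,e2,e3,e4,e5,e6⟩|⟨e1,e2,e3,e4,e5,e6⟩|⟨e1,e2,e3,e4,e5,e6⟩|⟨e1,e2,e3,e4,e5,e6⟩
    · exact ⟨21, eq_vec l _ _ _ _ _ _ _ ha e1 e2 e3 e4 e5 e6⟩
    · exact ⟨22, eq_vec l _ _ _ _ _ _ _ ha e1 e2 e3 e4 e5 e6⟩
    · exact ⟨23, eq_vec l _ _ _ _ _ _ _ ha e1 e2 e3 e4 e5 e6⟩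
    · exact ⟨24, eq_vec l _ _ _ _ _ _ _ ha e1 e2 e3 e4 e5 e6⟩
    · exact ⟨25, eq_vec l _ _ _ _ _ _ _ ha e1 e2 e3 e4 e5 e6⟩
    · exact ⟨26, eq_vec l _ _ _ _ _ _ _ ha e1 e2 e3 e4 e5 e6⟩


/-- For every root `r`, the reflection `s_r(x) = x + ⟨x,r⟩r` preserves the bilinear form,
fixes `k`, maps the set of exceptional vectors bijectively onto itself, is an involution,
and its fixed points among the exceptional vectors are exactly the `15` exceptional vectors
orthogonal to `r`; it moves exactly `12` exceptional vectors, hence acts on the `27`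
exceptional vectors as a product of `6` disjoint transpositions. -/
theorem stmt_3 (r : Fin 7 → ℤ) (hr : IsRoot r) :
    (∀ x y : Fin 7 → ℤ, form (reflFun r x) (reflFun r y) = form x y) ∧
    reflFun r kvec = kvec ∧
    Set.BijOn (reflFun r) {l : Fin 7 → ℤ | IsExc l} {l : Fin 7 → ℤ | IsExc l} ∧
    (∀ x : Fin 7 → ℤ, reflFun r (reflFun r x) = x) ∧
    ({l : Fin 7 → ℤ | IsExc l ∧ reflFun r l = l} =
      {l : Fin 7 → ℤ | IsExc l ∧ form r l = 0}) ∧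
    {l : Fin 7 → ℤ | IsExc l ∧ reflFun r l = l}.ncard = 15 ∧
    {l : Fin 7 → ℤ | IsExc l ∧ reflFun r l ≠ l}.ncard = 12 := by
  obtain ⟨hr1, hr2⟩ := hr
  have hrr : IsRoot r := ⟨hr1, hr2⟩
  have pres := refl_preserves r hr2
  have invol := refl_invol r hr2
  have hk := refl_k r hr1
  have maps : ∀ l, IsExc l → IsExc (reflFun r l) := by
    intro l hl
    refine ⟨?_, ?_⟩
    · rw [pres l l]; exact hl.1
    · calc form (reflFun r l) kvec = form (reflFun r l) (reflFun r kvec) := by rw [hk]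
        _ = form l kvec := pres l kvec
        _ = -1 := hl.2
  have hfixset : {l : Fin 7 → ℤ | IsExc l ∧ reflFun r l = l} =
      {l : Fin 7 → ℤ | IsExc l ∧ form r l = 0} := by
    ext l
    simp only [Set.mem_setOf_eq]
    exact and_congr_right fun _ => fix_iff r hrr l
  have hbij : Set.BijOn (reflFun r) {l : Fin 7 → ℤ | IsExc l} {l : Fin 7 → ℤ | IsExc l} := by
    refine ⟨fun l hl => maps l hl, fun a _ b _ h => ?_, fun l hl => ⟨reflFun r l, maps l hl, invol l⟩⟩
    have h2 := congrArg (reflFun r) h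
    rwa [invol, invol] at h2
  have hsum : ∑ j : Fin 27, (form r (vex j))^2 = 12 := by
    rw [sumsq, hr1, hr2]; ring
  have hcard12 : (Finset.univ.filter fun j : Fin 27 => ¬ (form r (vex j) = 0)).card = 12 := by
    have key : ((Finset.univ.filter fun j : Fin 27 => ¬ (form r (vex j) = 0)).card : ℤ)
        = ∑ j : Fin 27, (form r (vex j))^2 := by
      rw [Finset.card_filter]
      push_cast
      refine Finset.sum_congr rfl fun j _ => ?_
      by_cases h : form r (vex j) = 0
      · simp [h]
      · have hb := bound r (vex j) hrr (exc_vex j)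
        have hpm : form r (vex j) = -1 ∨ form r (vex j) = 1 := by omega
        rcases hpm with h' | h' <;> rw [h'] <;> norm_num
    rw [hsum] at key
    exact_mod_cast key
  have hcard15 : (Finset.univ.filter fun j : Fin 27 => form r (vex j) = 0).card = 15 := by
    have htot := Finset.card_filter_add_card_filter_not
      (s := (Finset.univ : Finset (Fin 27))) (p := fun j => form r (vex j) = 0)
    simp only [Finset.card_univ, Fintype.card_fin] at htot
    omega
  have himg : ∀ p : (Fin 7 → ℤ) → Prop,
      {l : Fin 7 → ℤ | IsExc l ∧ p l} = vex '' {j : Fin 27 | p (vex j)} := by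
    intro p
    ext l
    simp only [Set.mem_setOf_eq, Set.mem_image]
    constructor
    · rintro ⟨hl, hp⟩
      obtain ⟨j, rfl⟩ := classify l hl
      exact ⟨j, hp, rfl⟩
    · rintro ⟨j, hp, rfl⟩
      exact ⟨exc_vex j, hp⟩
  have hn15 : {l : Fin 7 → ℤ | IsExc l ∧ reflFun r l = l}.ncard = 15 := by
    rw [hfixset, himg (fun l => form r l = 0), Set.ncard_image_of_injective _ vex_inj]
    have hco : {j : Fin 27 | form r (vex j) = 0}
        = ↑(Finset.univ.filter fun j : Fin 27 => form r (vex j) = 0) := by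
      ext j; simp
    rw [hco, Set.ncard_coe_finset, hcard15]
  have hn12 : {l : Fin 7 → ℤ | IsExc l ∧ reflFun r l ≠ l}.ncard = 12 := by
    have hset : {l : Fin 7 → ℤ | IsExc l ∧ reflFun r l ≠ l}
        = {l : Fin 7 → ℤ | IsExc l ∧ ¬ (form r l = 0)} := by
      ext l
      simp only [Set.mem_setOf_eq]
      exact and_congr_right fun _ => not_congr (fix_iff r hrr l)
    rw [hset, himg (fun l => ¬ (form r l = 0)), Set.ncard_image_of_injective _ vex_inj]
    have hco : {j : Fin 27 | ¬ (form r (vex j) = 0)}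
        = ↑(Finset.univ.filter fun j : Fin 27 => ¬ (form r (vex j) = 0)) := by
      ext j; simp
    rw [hco, Set.ncard_coe_finset, hcard12]
  exact ⟨pres, hk, hbij, invol, hfixset, hn15, hn12⟩
end

section
/- If $v\in V$ satisfies $\langle v,k\rangle=0$ and $\langle v,\ell\rangle=0$ for every exceptional vector $\ell$, then $v=0$; that is, since the bilinear form on the $E_6$ lattice $k^{\perp}$ is nondegenerate and the exceptional vectors span the dual lattice rationally, a vector of $k^{\perp}$ orthogonal to all $27$ exceptional vectors vanishes. -/
/-- A vector of the `E₆` lattice `k^⊥` orthogonal to all `27` exceptional vectors is zero. -/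
theorem stmt_14 (v : Fin 7 → ℤ) (hk : form v kvec = 0)
    (h : ∀ l : Fin 7 → ℤ, IsExc l → form v l = 0) : v = 0 := by
  have h1 := h (fvec 1) (by constructor <;> decide)
  have h2 := h (fvec 2) (by constructor <;> decide)
  have h3 := h (fvec 3) (by constructor <;> decide)
  have h4 := h (fvec 4) (by constructor <;> decide)
  have h5 := h (fvec 5) (by constructor <;> decide)
  have h6 := h (fvec 6) (by constructor <;> decide)
  simp [form, fvec, kvec, Fin.sum_univ_seven] at h1 h2 h3 h4 h5 h6 hk
  funext i
  fin_cases i <;> simp <;> omega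
end
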